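/- arXiv:2203.00872 — 2 statements merged into one kernel-verified Lean document; each statement's English description precedes it below -/
import Mathlib

section
/- (Decomposition theorem.) Let T : ℕ with T ≥ 1, let θ : Fin n → Fin n → ℝ be any weight function, let A : Fin T → (Fin n → Fin n → ℝ) be a family of binary matrices, let A' be a binary matrix, and let Ā = (1/T) • ∑_{t} A t be the sample centroid. Then ∑_{t : Fin T} d_θ(A t, A') = ∑_{t : Fin T} dsq_θ(A t, Ā) + T * dsq_θ(Ā, A'). -/
open Finset

/-- The weighted distance d_θ over matrices. -/
noncomputable def dTheta {n : ℕ} (θ A₁ A₂ : Fin n → Fin n → ℝ) : ℝ :=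
  (1 / 2) * ∑ i : Fin n, ∑ j : Fin n, θ i j * |A₁ i j - A₂ i j|

/-- The squared version dsq_θ of the weighted distance. -/
noncomputable def dsqTheta {n : ℕ} (θ A₁ A₂ : Fin n → Fin n → ℝ) : ℝ :=
  (1 / 2) * ∑ i : Fin n, ∑ j : Fin n, θ i j * (A₁ i j - A₂ i j) ^ 2

/-- A matrix is binary if all its entries are 0 or 1. -/
def IsBinary {n : ℕ} (A : Fin n → Fin n → ℝ) : Prop :=
  ∀ i j, A i j ∈ ({0, 1} : Set ℝ)

/-! Between binary matrices `|x - y| = (x - y) ^ 2` entrywise, so `d_θ` coincides with `dsq_θ`.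
The identity is then, entry by entry and weighted by `θ`, the König–Huygens decomposition of the
sum of squared deviations from `A'` into the scatter about the mean plus `T` times the squared
offset of the mean from `A'`. -/

/- The cross term vanishes because deviations from the mean sum to zero. For empty `ι` both sides
are `0`, even though `1 / 0 = 0` makes the "mean" junk. -/
theorem sum_sq_sub_eq_sum_sq_sub_mean_add {ι : Type*} [Fintype ι] (a : ι → ℝ) (c : ℝ) :
    ∑ t, (a t - c) ^ 2 =
      ∑ t, (a t - (1 / (Fintype.card ι : ℝ)) * ∑ s, a s) ^ 2 +
        Fintype.card ι * ((1 / (Fintype.card ι : ℝ)) * ∑ s, a s - c) ^ 2 := by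
  set N : ℝ := (Fintype.card ι : ℝ)
  set m := 1 / N * ∑ s, a s
  have sum_sub_mean : ∑ t, (a t - m) = 0 := by
    cases isEmpty_or_nonempty ι
    · simp
    · have hN : N ≠ 0 := by positivity
      rw [sum_sub_distrib, sum_const, card_univ, nsmul_eq_mul]
      change ∑ s, a s - N * (1 / N * ∑ s, a s) = 0
      rw [← mul_assoc, mul_one_div_cancel hN, one_mul, sub_self]
  calc ∑ t, (a t - c) ^ 2 = ∑ t, ((a t - m) ^ 2 + 2 * (m - c) * (a t - m) + (m - c) ^ 2) :=
        sum_congr rfl fun t _ => by ring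
    _ = ∑ t, (a t - m) ^ 2 + N * (m - c) ^ 2 := by
        rw [sum_add_distrib, sum_add_distrib, ← mul_sum, sum_sub_mean,
          sum_const, card_univ, nsmul_eq_mul]
        ring

theorem abs_sub_eq_sq_sub_of_mem_zero_one {x y : ℝ} (hx : x ∈ ({0, 1} : Set ℝ))
    (hy : y ∈ ({0, 1} : Set ℝ)) : |x - y| = (x - y) ^ 2 := by
  rcases hx with rfl | rfl <;> rcases hy with rfl | rfl <;> norm_num

theorem dTheta_eq_dsqTheta_of_isBinary {n : ℕ} (θ : Fin n → Fin n → ℝ)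
    {A₁ A₂ : Fin n → Fin n → ℝ} (h₁ : IsBinary A₁) (h₂ : IsBinary A₂) :
    dTheta θ A₁ A₂ = dsqTheta θ A₁ A₂ := by
  simp only [dTheta, dsqTheta, abs_sub_eq_sq_sub_of_mem_zero_one (h₁ _ _) (h₂ _ _)]

theorem sum_dsqTheta_eq_sum_dsqTheta_centroid_add {n : ℕ} {ι : Type*} [Fintype ι]
    (θ : Fin n → Fin n → ℝ) (A : ι → Fin n → Fin n → ℝ) (B : Fin n → Fin n → ℝ) :
    ∑ t, dsqTheta θ (A t) B =
      ∑ t, dsqTheta θ (A t) ((1 / (Fintype.card ι : ℝ)) • ∑ s, A s) +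
        Fintype.card ι * dsqTheta θ ((1 / (Fintype.card ι : ℝ)) • ∑ s, A s) B := by
  set N : ℝ := (Fintype.card ι : ℝ)
  set Abar := (1 / N) • ∑ s, A s
  have entry : ∀ i j, θ i j * ∑ t, (A t i j - B i j) ^ 2 =
      ∑ t, θ i j * (A t i j - Abar i j) ^ 2 + N * (θ i j * (Abar i j - B i j) ^ 2) := by
    intro i j
    have hAbar : Abar i j = 1 / N * ∑ s, A s i j := by simp [Abar, Finset.sum_apply]
    rw [sum_sq_sub_eq_sum_sq_sub_mean_add (fun t => A t i j), ← hAbar, mul_add, mul_sum]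
    ring
  have swap : ∀ f : ι → Fin n → Fin n → ℝ, ∑ t, ∑ i, ∑ j, f t i j = ∑ i, ∑ j, ∑ t, f t i j :=
    fun f => by rw [sum_comm]; exact sum_congr rfl fun i _ => sum_comm
  simp only [dsqTheta, ← mul_sum]
  rw [swap, swap]
  simp_rw [← mul_sum, entry, sum_add_distrib, ← mul_sum]
  ring

theorem decomposition_theorem_general {n : ℕ} (T : ℕ)
    (θ : Fin n → Fin n → ℝ) (A : Fin T → Fin n → Fin n → ℝ)
    (hA : ∀ t, IsBinary (A t)) (A' : Fin n → Fin n → ℝ) (hA' : IsBinary A') :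
    ∑ t : Fin T, dTheta θ (A t) A' =
      (∑ t : Fin T, dsqTheta θ (A t) ((1 / (T : ℝ)) • ∑ s : Fin T, A s)) +
        (T : ℝ) * dsqTheta θ ((1 / (T : ℝ)) • ∑ s : Fin T, A s) A' := by
  simp only [dTheta_eq_dsqTheta_of_isBinary θ (hA _) hA']
  simpa using sum_dsqTheta_eq_sum_dsqTheta_centroid_add θ A A'

/-- Decomposition theorem: for binary matrices, the sum of d_θ distances to a fixed binary
matrix A' decomposes as the variance about the sample centroid plus T times the squared
distance of the centroid to A'. -/
theorem decomposition_theorem {n : ℕ} (T : ℕ) (hT : 1 ≤ T)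
    (θ : Fin n → Fin n → ℝ) (A : Fin T → Fin n → Fin n → ℝ)
    (hA : ∀ t, IsBinary (A t)) (A' : Fin n → Fin n → ℝ) (hA' : IsBinary A') :
    ∑ t : Fin T, dTheta θ (A t) A' =
      (∑ t : Fin T, dsqTheta θ (A t) ((1 / (T : ℝ)) • ∑ s : Fin T, A s)) +
        (T : ℝ) * dsqTheta θ ((1 / (T : ℝ)) • ∑ s : Fin T, A s) A' :=
  decomposition_theorem_general T θ A hA A' hA'
end

section
/- (Sample complexity for the population centroid, entrywise.) Let n ≥ 1, ε > 0, δ ∈ (0,1), and let μ be a probability measure on the space of matrices Fin n → Fin n → ℝ such that μ-almost every matrix A is binary, symmetric (A i j = A j i), and has unit diagonal (A i i = 1). Let A_pop i j = ∫ A i j dμ(A). Let T : ℕ satisfy (T : ℝ) ≥ (1/ε^2) * Real.log (n/δ). Then under the T-fold product measure μ^{⊗T} (i.i.d. samples A₁, …, A_T), with probability at least 1 − δ the sample centroid Ā = (1/T) • ∑_t A t satisfies |Ā i j − A_pop i j| ≤ ε for all i, j : Fin n. -/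
/-!
Each entry of the sample centroid is a mean of `T` i.i.d. `{0,1}`-valued variables, so by
Hoeffding's inequality it deviates from its expectation by at least `ε` with probability at most
`2 exp (-2 T ε²) ≤ 2 (δ / n)²`. Almost surely every sample is symmetric with unit diagonal, and so
is the population centroid; hence the diagonal entries never deviate and an entry deviates only
together with its mirror image. A union bound over the `n (n - 1) / 2` entries above the diagonal
leaves a failure probability of at most `n² (δ / n)² = δ² ≤ δ`.
-/

open Finset MeasureTheory ProbabilityTheory Real
open scoped NNReal

section Probability

variable {Ω : Type*} [MeasurableSpace Ω] {μ : Measure Ω} [IsProbabilityMeasure μ] {X : Ω → ℝ}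

lemma ProbabilityTheory.HasSubgaussianMGF.measureReal_pi_le_abs_sum_le {c : ℝ≥0}
    (hX : HasSubgaussianMGF X c μ) (T : ℕ) {ε : ℝ} (hε : 0 ≤ ε) :
    (Measure.pi fun _ : Fin T => μ).real {A | ε ≤ |∑ t, X (A t)|} ≤
      2 * exp (-ε ^ 2 / (2 * (T * c))) := by
  have h_tail (Y : Ω → ℝ) (hY : HasSubgaussianMGF Y c μ) :
      (Measure.pi fun _ : Fin T => μ).real {A | ε ≤ ∑ t, Y (A t)} ≤
        exp (-ε ^ 2 / (2 * (T * c))) := by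
    have h_coord (t : Fin T) :
        HasSubgaussianMGF (fun A : Fin T → Ω => Y (A t)) c (Measure.pi fun _ => μ) :=
      .of_map (Y := Function.eval t) (measurable_pi_apply t).aemeasurable
        (by rwa [(measurePreserving_eval (fun _ => μ) t).map_eq])
    simpa using measure_sum_ge_le_of_iIndepFun
      (iIndepFun_pi (X := fun _ => Y) fun _ => hY.aemeasurable) (s := univ)
      (fun t _ => h_coord t) hε
  calc _ ≤ (Measure.pi fun _ : Fin T => μ).real
        ({A | ε ≤ ∑ t, X (A t)} ∪ {A | ε ≤ ∑ t, (-X) (A t)}) := by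
        refine measureReal_mono fun A hA => ?_
        simpa only [Set.mem_union, Set.mem_ofPred, Pi.neg_apply, sum_neg_distrib]
          using le_abs.mp hA
    _ ≤ _ := (measureReal_union_le _ _).trans (by linarith [h_tail X hX, h_tail (-X) hX.neg])

lemma measureReal_pi_le_abs_sampleMean_sub_integral_le {a b : ℝ} (hX : AEMeasurable X μ)
    (hab : ∀ᵐ ω ∂μ, X ω ∈ Set.Icc a b) {T : ℕ} (hT : 0 < T) {ε : ℝ} (hε : 0 ≤ ε) :
    (Measure.pi fun _ : Fin T => μ).real {A | ε ≤ |(T : ℝ)⁻¹ * ∑ t, X (A t) - μ[X]|} ≤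
      2 * exp (-2 * T * ε ^ 2 / (b - a) ^ 2) := by
  have hT' : (0 : ℝ) < T := by exact_mod_cast hT
  have h_set : {A : Fin T → Ω | ε ≤ |(T : ℝ)⁻¹ * ∑ t, X (A t) - μ[X]|} =
      {A | T * ε ≤ |∑ t, (X (A t) - μ[X])|} := by
    ext A
    simp only [Set.mem_ofPred, sum_sub_distrib, sum_const, card_univ, Fintype.card_fin,
      nsmul_eq_mul]
    rw [show ∑ t, X (A t) - T * μ[X] = T * ((T : ℝ)⁻¹ * ∑ t, X (A t) - μ[X]) by field_simp,
      abs_mul, abs_of_pos hT', mul_le_mul_iff_right₀ hT']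
  rw [h_set]
  refine ((hasSubgaussianMGF_of_mem_Icc hX hab).measureReal_pi_le_abs_sum_le T
    (by positivity)).trans_eq ?_
  congr 2
  push_cast
  rw [Real.norm_eq_abs, div_pow, sq_abs]
  rcases eq_or_ne (b - a) 0 with h | h
  · simp [h]
  · field_simp

lemma ofReal_one_sub_le_of_measureReal_compl_le {s : Set Ω} {δ : ℝ} (h : μ.real sᶜ ≤ δ) :
    ENNReal.ofReal (1 - δ) ≤ μ s := by
  have h_cover : 1 ≤ μ.real s + μ.real sᶜ := by
    simpa [Set.union_compl_self] using measureReal_union_le (μ := μ) s sᶜ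
  rw [← ofReal_measureReal]
  exact ENNReal.ofReal_le_ofReal (by linarith)

end Probability

lemma ae_pi_forall_of_ae {Ω ι : Type*} [MeasurableSpace Ω] [Fintype ι] {μ : Measure Ω}
    [SigmaFinite μ] {p : Ω → Prop} (h : ∀ᵐ ω ∂μ, p ω) :
    ∀ᵐ A ∂(Measure.pi fun _ : ι => μ), ∀ i, p (A i) :=
  ae_all_iff.2 fun i => (Measure.tendsto_eval_ae_ae (i := i)).eventually h

lemma measureReal_biUnion_fst_lt_snd_le {Ω : Type*} [MeasurableSpace Ω] {P : Measure Ω}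
    {α : Type*} [Fintype α] [LinearOrder α] {s : α → α → Set Ω} {b : ℝ} (hb : 0 ≤ b)
    (h : ∀ i j, P.real (s i j) ≤ b) :
    P.real (⋃ q ∈ ({q | q.1 < q.2} : Finset (α × α)), s q.1 q.2) ≤
      Fintype.card α ^ 2 / 2 * b := by
  have h_card : (#({q | q.1 < q.2} : Finset (α × α)) : ℝ) ≤ Fintype.card α ^ 2 / 2 := by
    have h_choose := card_product_filter_lt (s := (univ : Finset α))
    rw [univ_product_univ, card_univ] at h_choose
    simpa [h_choose] using Nat.choose_le_pow_div (α := ℝ) 2 (Fintype.card α)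
  calc _ ≤ ∑ q ∈ ({q : α × α | q.1 < q.2} : Finset (α × α)), P.real (s q.1 q.2) :=
        measureReal_biUnion_finset_le _ _
    _ ≤ #({q | q.1 < q.2} : Finset (α × α)) * b := by
        simpa using sum_le_card_nsmul _ _ _ fun (q : α × α) _ => h q.1 q.2
    _ ≤ _ := by gcongr

lemma exists_lt_lt_abs_of_symm {α : Type*} [LinearOrder α] {M : α → α → ℝ}
    (h_symm : ∀ i j, M i j = M j i) (h_diag : ∀ i, M i i = 0) {ε : ℝ} (hε : 0 ≤ ε) {i j : α}
    (h : ε < |M i j|) : ∃ i j, i < j ∧ ε < |M i j| := by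
  rcases lt_trichotomy i j with hij | rfl | hji
  · exact ⟨i, j, hij, h⟩
  · simp only [h_diag, abs_zero] at h
    linarith
  · exact ⟨j, i, hji, h_symm i j ▸ h⟩

lemma exp_neg_two_mul_le_inv_sq {T ε x : ℝ} (hε : 0 < ε) (hx : 0 < x)
    (hT : (1 / ε ^ 2) * log x ≤ T) : exp (-2 * T * ε ^ 2) ≤ x⁻¹ ^ 2 := by
  have h_log : log x ≤ T * ε ^ 2 := by
    rwa [one_div_mul_eq_div, div_le_iff₀ (by positivity)] at hT
  calc exp (-2 * T * ε ^ 2) ≤ exp (log (x⁻¹ ^ 2)) :=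
        exp_le_exp.2 (by rw [log_pow, log_inv]; push_cast; linarith)
    _ = x⁻¹ ^ 2 := exp_log (by positivity)

section Centroid

variable {α : Type*} {T : ℕ} {μ : Measure (α → α → ℝ)} {A : Fin T → α → α → ℝ}

lemma measureReal_pi_le_abs_centroid_apply_sub_integral_le [IsProbabilityMeasure μ]
    {a b : ℝ} {i j : α} (hij : ∀ᵐ B ∂μ, B i j ∈ Set.Icc a b) (hT : 0 < T) {ε : ℝ} (hε : 0 ≤ ε) :
    (Measure.pi fun _ : Fin T => μ).real
        {A | ε ≤ |((1 / (T : ℝ)) • ∑ t, A t) i j - ∫ B, B i j ∂μ|} ≤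
      2 * exp (-2 * T * ε ^ 2 / (b - a) ^ 2) := by
  simpa [Finset.sum_apply] using measureReal_pi_le_abs_sampleMean_sub_integral_le
    (measurable_pi_apply i).eval.aemeasurable hij hT hε

lemma centroid_apply_sub_integral_comm (hμ : ∀ᵐ B ∂μ, ∀ i j, B i j = B j i)
    (hA : ∀ t i j, A t i j = A t j i) (i j : α) :
    ((1 / (T : ℝ)) • ∑ t, A t) i j - ∫ B, B i j ∂μ =
      ((1 / (T : ℝ)) • ∑ t, A t) j i - ∫ B, B j i ∂μ := by
  simp only [Pi.smul_apply, Finset.sum_apply]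
  rw [sum_congr rfl fun t _ => hA t i j, integral_congr_ae (hμ.mono fun B hB => hB i j)]

lemma centroid_apply_self_sub_integral [IsProbabilityMeasure μ] (hT : 0 < T)
    (hμ : ∀ᵐ B ∂μ, ∀ i, B i i = 1) (hA : ∀ t i, A t i i = 1) (i : α) :
    ((1 / (T : ℝ)) • ∑ t, A t) i i - ∫ B, B i i ∂μ = 0 := by
  simp only [Pi.smul_apply, Finset.sum_apply]
  rw [sum_congr rfl fun t _ => hA t i, integral_congr_ae (hμ.mono fun B hB => hB i)]
  simp [hT.ne']

lemma ae_pi_exists_lt_lt_abs_centroid_apply_sub_integral [LinearOrder α] [IsProbabilityMeasure μ]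
    (hT : 0 < T) (hμ : ∀ᵐ B ∂μ, (∀ i j, B i j = B j i) ∧ ∀ i, B i i = 1) {ε : ℝ} (hε : 0 ≤ ε) :
    ∀ᵐ A ∂(Measure.pi fun _ : Fin T => μ), ∀ i j,
      ε < |((1 / (T : ℝ)) • ∑ t, A t) i j - ∫ B, B i j ∂μ| →
      ∃ i j, i < j ∧ ε < |((1 / (T : ℝ)) • ∑ t, A t) i j - ∫ B, B i j ∂μ| := by
  filter_upwards [ae_pi_forall_of_ae hμ] with A hA i j
  exact exists_lt_lt_abs_of_symm
    (centroid_apply_sub_integral_comm (hμ.mono fun _ hB => hB.1) fun t => (hA t).1)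
    (centroid_apply_self_sub_integral hT (hμ.mono fun _ hB => hB.2) fun t => (hA t).2) hε

end Centroid

/-- Sample complexity for the population centroid, entrywise: with
`T ≥ (1/ε²) log(n/δ)` i.i.d. samples, with probability at least 1 - δ every entry of the
sample centroid is within ε of the corresponding entry of the population centroid. -/
theorem centroid_sample_complexity_entrywise (n : ℕ) (hn : 1 ≤ n)
    (ε δ : ℝ) (hε : 0 < ε) (hδ : δ ∈ Set.Ioo (0 : ℝ) 1)
    (μ : Measure (Fin n → Fin n → ℝ)) [IsProbabilityMeasure μ]
    (hμ : ∀ᵐ A ∂μ, (∀ i j, A i j ∈ ({0, 1} : Set ℝ)) ∧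
      (∀ i j, A i j = A j i) ∧ (∀ i, A i i = 1))
    (T : ℕ) (hT : (1 / ε ^ 2) * Real.log ((n : ℝ) / δ) ≤ (T : ℝ)) :
    ENNReal.ofReal (1 - δ) ≤
      Measure.pi (fun _ : Fin T => μ)
        {A : Fin T → Fin n → Fin n → ℝ |
          ∀ i j : Fin n,
            |((1 / (T : ℝ)) • ∑ t : Fin T, A t) i j - ∫ B, B i j ∂μ| ≤ ε} := by
  obtain ⟨hδ0, hδ1⟩ := hδ
  have hT0 : 0 < T := by
    have h_log : 0 < log (n / δ) :=
      log_pos ((one_lt_div hδ0).2 (hδ1.trans_le (by exact_mod_cast hn)))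
    exact_mod_cast (mul_pos (by positivity) h_log).trans_le hT
  set P := Measure.pi fun _ : Fin T => μ
  set dev : (Fin T → Fin n → Fin n → ℝ) → Fin n → Fin n → ℝ :=
    fun A i j => ((1 / (T : ℝ)) • ∑ t, A t) i j - ∫ B, B i j ∂μ
  have h_tail (i j : Fin n) : P.real {A | ε ≤ |dev A i j|} ≤ 2 * (δ / n) ^ 2 := by
    have h_mem : ∀ᵐ B ∂μ, B i j ∈ Set.Icc (0 : ℝ) 1 :=
      hμ.mono fun B hB => Set.insert_subset_iff.2 ⟨by simp, by simp⟩ (hB.1 i j)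
    refine (measureReal_pi_le_abs_centroid_apply_sub_integral_le h_mem hT0 hε.le).trans ?_
    rw [sub_zero, one_pow, div_one, ← inv_div]
    gcongr
    exact exp_neg_two_mul_le_inv_sq hε (by positivity) hT
  have h_cover : ∀ᵐ A ∂P, (¬ ∀ i j, |dev A i j| ≤ ε) →
      A ∈ ⋃ q ∈ ({q | q.1 < q.2} : Finset (Fin n × Fin n)), {A | ε ≤ |dev A q.1 q.2|} := by
    filter_upwards [ae_pi_exists_lt_lt_abs_centroid_apply_sub_integral hT0
      (hμ.mono fun _ hB => hB.2) hε.le] with A hA hA_bad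
    push Not at hA_bad
    obtain ⟨i, j, hij⟩ := hA_bad
    obtain ⟨i, j, hlt, h⟩ := hA i j hij
    exact Set.mem_biUnion (x := (i, j)) (by simpa using hlt) h.le
  refine ofReal_one_sub_le_of_measureReal_compl_le ?_
  calc P.real {A | ∀ i j, |dev A i j| ≤ ε}ᶜ
      ≤ P.real (⋃ q ∈ ({q | q.1 < q.2} : Finset (Fin n × Fin n)), {A | ε ≤ |dev A q.1 q.2|}) :=
        ENNReal.toReal_mono (measure_ne_top _ _) (measure_mono_ae h_cover)
    _ ≤ n ^ 2 / 2 * (2 * (δ / n) ^ 2) := by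
        simpa using measureReal_biUnion_fst_lt_snd_le (by positivity) h_tail
    _ = δ ^ 2 := by field_simp
    _ ≤ δ := by nlinarith
end
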